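/- Let X be an isotropic random vector in ℝⁿ (n ≥ 2), with finite third moment, whose distribution is spherically symmetric, and set W = X₁. Then for every smooth, compactly supported g : ℝ → ℝ, 𝔼[W·g(W)] = 𝔼[ 𝔼[X₂² | W] · g′(W) ]. -/

import Mathlib

open MeasureTheory ProbabilityTheory BigOperators

theorem stmt19
    {Ω : Type*} [MeasureSpace Ω] [IsProbabilityMeasure (ℙ : Measure Ω)]
    {n : ℕ} (hn : 2 ≤ n)
    (X : Ω → Fin n → ℝ) (hXmeas : Measurable X)
    -- finite third moment
    (hmom3 : Integrable (fun ω => (∑ i, X ω i ^ 2) ^ ((3 : ℝ) / 2)) ℙ)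
    -- isotropy: `𝔼 X_i = 0`, `𝔼 X_i X_j = δ_{ij}`
    (hint1 : ∀ i, Integrable (fun ω => X ω i) ℙ)
    (hint2 : ∀ i j, Integrable (fun ω => X ω i * X ω j) ℙ)
    (hiso_mean : ∀ i, ∫ ω, X ω i ∂ℙ = 0)
    (hiso_cov : ∀ i j, ∫ ω, X ω i * X ω j ∂ℙ = if i = j then (1 : ℝ) else 0)
    -- spherical symmetry: invariance under all orthogonal transformations
    (hsymm : ∀ Q : Matrix (Fin n) (Fin n) ℝ, Q ∈ Matrix.orthogonalGroup (Fin n) ℝ →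
      Measure.map (fun ω => Q.mulVec (X ω)) ℙ = Measure.map X ℙ) :
    -- with `W = X₁`: for every smooth compactly supported `g`,
    -- `𝔼[W g(W)] = 𝔼[𝔼[X₂² | W] g′(W)]`
    ∀ g : ℝ → ℝ, ContDiff ℝ (⊤ : ℕ∞) g → HasCompactSupport g →
      ∫ ω, X ω ⟨0, by omega⟩ * g (X ω ⟨0, by omega⟩) ∂ℙ =
        ∫ ω, (ℙ[fun ω' => X ω' ⟨1, by omega⟩ ^ 2 |
            MeasurableSpace.comap (fun ω' => X ω' ⟨0, by omega⟩) inferInstance]) ω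
          * deriv g (X ω ⟨0, by omega⟩) ∂ℙ := by
  intro g hg hgc
  have h0n : 0 < n := by omega
  have h1n : 1 < n := by omega
  set i0 : Fin n := ⟨0, h0n⟩ with hi0
  set i1 : Fin n := ⟨1, h1n⟩ with hi1
  have hne : i0 ≠ i1 := by simp [hi0, hi1, Fin.ext_iff]
  set W : Ω → ℝ := fun ω => X ω i0 with hWdef
  set Y : Ω → ℝ := fun ω => X ω i1 with hYdef
  have hW : Measurable W := (measurable_pi_apply i0).comp hXmeas
  have hY : Measurable Y := (measurable_pi_apply i1).comp hXmeas
  -- bounds on g and deriv g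
  have hgcont : Continuous g := hg.continuous
  have hg'cont : Continuous (deriv g) := hg.continuous_deriv (by simp)
  obtain ⟨Cg, hCg⟩ := hgc.exists_bound_of_continuous hgcont
  obtain ⟨Cg', hCg'⟩ := (hgc.deriv).exists_bound_of_continuous hg'cont
  have hCg0 : 0 ≤ Cg := le_trans (norm_nonneg _) (hCg 0)
  have hCg'0 : 0 ≤ Cg' := le_trans (norm_nonneg _) (hCg' 0)
  -- the rotation matrices
  set Q : ℝ → Matrix (Fin n) (Fin n) ℝ := fun θ =>
    Matrix.of fun i j =>
      if i = i0 then (if j = i0 then Real.cos θ else if j = i1 then -Real.sin θ else 0)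
      else if i = i1 then (if j = i0 then Real.sin θ else if j = i1 then Real.cos θ else 0)
      else if j = i then 1 else 0 with hQdef
  have hQ0 : ∀ (θ : ℝ) (k : Fin n), Q θ i0 k =
      if k = i0 then Real.cos θ else if k = i1 then -Real.sin θ else 0 := by
    intro θ k; simp [hQdef]
  have hQ1 : ∀ (θ : ℝ) (k : Fin n), Q θ i1 k =
      if k = i0 then Real.sin θ else if k = i1 then Real.cos θ else 0 := by
    intro θ k; simp [hQdef, hne.symm]
  have hQo : ∀ (θ : ℝ) (i k : Fin n), i ≠ i0 → i ≠ i1 → Q θ i k =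
      if k = i then 1 else 0 := by
    intro θ i k h h1; simp [hQdef, h, h1]
  -- generic row-sums of Q
  have hsum : ∀ (θ : ℝ) (i : Fin n) (v : Fin n → ℝ),
      ∑ k, Q θ i k * v k =
        if i = i0 then Real.cos θ * v i0 - Real.sin θ * v i1
        else if i = i1 then Real.sin θ * v i0 + Real.cos θ * v i1 else v i := by
    intro θ i v
    rcases eq_or_ne i i0 with h | h
    · have e : ∀ k, Q θ i k * v k =
          (if k = i0 then Real.cos θ * v i0 else 0) +
          (if k = i1 then -Real.sin θ * v i1 else 0) := by
        intro k
        rw [h, hQ0]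
        rcases eq_or_ne k i0 with h0 | h0
        · subst h0; simp [hne]
        · rcases eq_or_ne k i1 with h1 | h1
          · subst h1; simp [hne.symm, h0]
          · simp [h0, h1]
      rw [Finset.sum_congr rfl fun k _ => e k, Finset.sum_add_distrib,
        Finset.sum_ite_eq' Finset.univ i0, Finset.sum_ite_eq' Finset.univ i1]
      simp [h]; ring
    · rcases eq_or_ne i i1 with h1 | h1
      · have e : ∀ k, Q θ i k * v k =
            (if k = i0 then Real.sin θ * v i0 else 0) +
            (if k = i1 then Real.cos θ * v i1 else 0) := by
          intro k
          rw [h1, hQ1]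
          rcases eq_or_ne k i0 with h0 | h0
          · subst h0; simp [hne]
          · rcases eq_or_ne k i1 with hh | hh
            · subst hh; simp [hne.symm, h0]
            · simp [h0, hh]
        rw [Finset.sum_congr rfl fun k _ => e k, Finset.sum_add_distrib,
          Finset.sum_ite_eq' Finset.univ i0, Finset.sum_ite_eq' Finset.univ i1]
        simp [h1, hne.symm]
      · have e : ∀ k, Q θ i k * v k = if k = i then v i else 0 := by
          intro k
          rw [hQo θ i k h h1]
          rcases eq_or_ne k i with h0 | h0
          · subst h0; simp
          · simp [h0]
        rw [Finset.sum_congr rfl fun k _ => e k, Finset.sum_ite_eq' Finset.univ i]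
        simp [h, h1]
  -- Q θ is orthogonal
  have horth : ∀ θ, Q θ ∈ Matrix.orthogonalGroup (Fin n) ℝ := by
    intro θ
    rw [Matrix.mem_orthogonalGroup_iff]
    ext i j
    have hstar : (Q θ * star (Q θ)) i j = ∑ k, Q θ i k * Q θ j k := by
      simp [Matrix.mul_apply, Matrix.star_apply, mul_comm]
    show (Q θ * star (Q θ)) i j = (1 : Matrix (Fin n) (Fin n) ℝ) i j
    rw [hstar, hsum θ i (fun k => Q θ j k), Matrix.one_apply]
    rcases eq_or_ne i i0 with h | h
    · subst h
      rw [if_pos rfl]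
      rcases eq_or_ne j i0 with h' | h'
      · subst h'
        rw [hQ0, hQ0, if_pos rfl, if_neg hne.symm, if_pos rfl, if_pos rfl]
        nlinarith [Real.sin_sq_add_cos_sq θ]
      · rcases eq_or_ne j i1 with h1' | h1'
        · subst h1'
          rw [hQ1, hQ1, if_pos rfl, if_neg hne.symm, if_pos rfl, if_neg hne]
          ring
        · rw [hQo θ j i0 h' h1', hQo θ j i1 h' h1',
            if_neg (fun e => h' e.symm), if_neg (fun e => h1' e.symm)]
          ring
    · rcases eq_or_ne i i1 with h1 | h1
      · subst h1
        rw [if_neg h, if_pos rfl]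
        rcases eq_or_ne j i0 with h' | h'
        · subst h'
          rw [hQ0, hQ0, if_pos rfl, if_neg hne.symm, if_pos rfl, if_neg hne.symm]
          ring
        · rcases eq_or_ne j i1 with h1' | h1'
          · subst h1'
            rw [hQ1, hQ1, if_pos rfl, if_neg hne.symm, if_pos rfl, if_pos rfl]
            nlinarith [Real.sin_sq_add_cos_sq θ]
          · rw [hQo θ j i0 h' h1', hQo θ j i1 h' h1',
              if_neg (fun e => h' e.symm), if_neg (fun e => h1' e.symm)]
            ring
      · rw [if_neg h, if_neg h1]
        rcases eq_or_ne j i0 with h' | h'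
        · subst h'
          rw [hQ0, if_neg h, if_neg h1]
          rw [if_neg h]
        · rcases eq_or_ne j i1 with h1' | h1'
          · subst h1'
            rw [hQ1, if_neg h, if_neg h1]
            rw [if_neg h1]
          · rw [hQo θ j i h' h1']
  -- mulVec components
  have hmv : ∀ (θ : ℝ) (x : Fin n → ℝ),
      ((Q θ).mulVec x i0 = Real.cos θ * x i0 - Real.sin θ * x i1) ∧
      ((Q θ).mulVec x i1 = Real.sin θ * x i0 + Real.cos θ * x i1) := by
    intro θ x
    constructor
    · rw [Matrix.mulVec, dotProduct, hsum θ i0 x]; simp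
    · rw [Matrix.mulVec, dotProduct, hsum θ i1 x]; simp [hne.symm]
  -- change of variables: the integral is invariant under rotation
  have hmapQ : ∀ θ : ℝ, Measurable fun ω => (Q θ).mulVec (X ω) := by
    intro θ
    have : Continuous fun v : Fin n → ℝ => (Q θ).mulVec v := by
      have := (Matrix.mulVecLin (Q θ)).continuous_of_finiteDimensional
      exact this
    exact this.measurable.comp hXmeas
  have hFcont : Continuous fun x : Fin n → ℝ => x i1 * g (x i0) :=
    (continuous_apply i1).mul (hgcont.comp (continuous_apply i0))
  have hconst : ∀ θ : ℝ,
      ∫ ω, (Real.sin θ * W ω + Real.cos θ * Y ω) *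
          g (Real.cos θ * W ω - Real.sin θ * Y ω) ∂ℙ
        = ∫ ω, Y ω * g (W ω) ∂ℙ := by
    intro θ
    have hQ := hsymm (Q θ) (horth θ)
    calc ∫ ω, (Real.sin θ * W ω + Real.cos θ * Y ω) *
            g (Real.cos θ * W ω - Real.sin θ * Y ω) ∂ℙ
        = ∫ ω, (fun x : Fin n → ℝ => x i1 * g (x i0)) ((Q θ).mulVec (X ω)) ∂ℙ := by
          refine integral_congr_ae (Filter.Eventually.of_forall fun ω => ?_)
          simp only [(hmv θ (X ω)).1, (hmv θ (X ω)).2]; rfl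
      _ = ∫ x, x i1 * g (x i0) ∂(Measure.map (fun ω => (Q θ).mulVec (X ω)) ℙ) := by
          rw [integral_map (hmapQ θ).aemeasurable hFcont.aestronglyMeasurable]
      _ = ∫ x, x i1 * g (x i0) ∂(Measure.map X ℙ) := by rw [hQ]
      _ = ∫ ω, Y ω * g (W ω) ∂ℙ := by
          rw [integral_map hXmeas.aemeasurable hFcont.aestronglyMeasurable]
  -- differentiate under the integral at θ = 0
  set F : ℝ → Ω → ℝ := fun θ ω =>
    (Real.sin θ * W ω + Real.cos θ * Y ω) * g (Real.cos θ * W ω - Real.sin θ * Y ω)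
    with hFdef
  set F' : ℝ → Ω → ℝ := fun θ ω =>
    (Real.cos θ * W ω - Real.sin θ * Y ω) * g (Real.cos θ * W ω - Real.sin θ * Y ω)
    + (Real.sin θ * W ω + Real.cos θ * Y ω) *
        (deriv g (Real.cos θ * W ω - Real.sin θ * Y ω) *
          (-Real.sin θ * W ω - Real.cos θ * Y ω)) with hF'def
  set bound : Ω → ℝ := fun ω => (|W ω| + |Y ω|) * Cg + (|W ω| + |Y ω|) ^ 2 * Cg'
    with hbdef
  have habs : ∀ (a b c d : ℝ), |a| ≤ 1 → |b| ≤ 1 → |a * c + b * d| ≤ |c| + |d| := by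
    intro a b c d ha hb
    calc |a * c + b * d| ≤ |a * c| + |b * d| := abs_add_le _ _
      _ ≤ |c| + |d| := by
          rw [abs_mul, abs_mul]
          gcongr <;> [exact le_trans (by nlinarith [abs_nonneg c]) (le_refl _);
            exact le_trans (by nlinarith [abs_nonneg d]) (le_refl _)]
  have hFmeas : ∀ θ, AEStronglyMeasurable (F θ) ℙ := by
    intro θ
    have hc : Continuous fun p : ℝ × ℝ =>
        (Real.sin θ * p.1 + Real.cos θ * p.2) * g (Real.cos θ * p.1 - Real.sin θ * p.2) := by
      fun_prop
    exact (hc.measurable.comp (hW.prodMk hY)).aestronglyMeasurable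
  have hF'meas : ∀ θ, AEStronglyMeasurable (F' θ) ℙ := by
    intro θ
    have hc : Continuous fun p : ℝ × ℝ =>
        (Real.cos θ * p.1 - Real.sin θ * p.2) * g (Real.cos θ * p.1 - Real.sin θ * p.2)
        + (Real.sin θ * p.1 + Real.cos θ * p.2) *
            (deriv g (Real.cos θ * p.1 - Real.sin θ * p.2) *
              (-Real.sin θ * p.1 - Real.cos θ * p.2)) := by
      fun_prop
    exact (hc.measurable.comp (hW.prodMk hY)).aestronglyMeasurable
  have hYgW : Integrable (fun ω => Y ω * g (W ω)) ℙ := by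
    have : Integrable (fun ω => g (W ω) * Y ω) ℙ :=
      (hint1 i1).bdd_mul ((hgcont.measurable.comp hW).aemeasurable).aestronglyMeasurable
        (Filter.Eventually.of_forall fun ω => hCg (W ω))
    exact this.congr (Filter.Eventually.of_forall fun ω => mul_comm _ _)
  have hF0int : Integrable (F 0) ℙ := by
    have : F 0 = fun ω => Y ω * g (W ω) := by
      funext ω; simp [hFdef]
    rw [this]; exact hYgW
  have hboundint : Integrable bound ℙ := by
    have h1 : Integrable (fun ω => |W ω| + |Y ω|) ℙ := (hint1 i0).abs.add (hint1 i1).abs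
    have h2 : Integrable (fun ω => (|W ω| + |Y ω|) ^ 2) ℙ := by
      have hWW : Integrable (fun ω => W ω * W ω) ℙ := hint2 i0 i0
      have hYY : Integrable (fun ω => Y ω * Y ω) ℙ := hint2 i1 i1
      have hWY : Integrable (fun ω => |W ω * Y ω|) ℙ := (hint2 i0 i1).abs
      have := (hWW.add (hWY.const_mul 2)).add hYY
      refine this.congr (Filter.Eventually.of_forall fun ω => ?_)
      show W ω * W ω + 2 * |W ω * Y ω| + Y ω * Y ω = (|W ω| + |Y ω|) ^ 2
      calc W ω * W ω + 2 * |W ω * Y ω| + Y ω * Y ω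
          = |W ω| ^ 2 + 2 * (|W ω| * |Y ω|) + |Y ω| ^ 2 := by
            rw [abs_mul, sq_abs, sq_abs]; ring
        _ = (|W ω| + |Y ω|) ^ 2 := by ring
    exact (h1.mul_const Cg).add (h2.mul_const Cg')
  have hbound : ∀ᵐ ω ∂ℙ, ∀ θ ∈ Metric.ball (0 : ℝ) 1, ‖F' θ ω‖ ≤ bound ω := by
    refine Filter.Eventually.of_forall fun ω θ _ => ?_
    have hsin := Real.abs_sin_le_one θ
    have hcos := Real.abs_cos_le_one θ
    have e1 : |Real.cos θ * W ω - Real.sin θ * Y ω| ≤ |W ω| + |Y ω| := by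
      have := habs (Real.cos θ) (-Real.sin θ) (W ω) (Y ω) hcos (by rwa [abs_neg])
      simpa [sub_eq_add_neg, neg_mul] using this
    have e2 : |Real.sin θ * W ω + Real.cos θ * Y ω| ≤ |W ω| + |Y ω| := by
      exact habs _ _ _ _ hsin hcos
    have e3 : |-Real.sin θ * W ω - Real.cos θ * Y ω| ≤ |W ω| + |Y ω| := by
      have := habs (-Real.sin θ) (-Real.cos θ) (W ω) (Y ω) (by rwa [abs_neg]) (by rwa [abs_neg])
      simpa [sub_eq_add_neg, neg_mul] using this
    have hgb := hCg (Real.cos θ * W ω - Real.sin θ * Y ω)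
    have hg'b := hCg' (Real.cos θ * W ω - Real.sin θ * Y ω)
    rw [Real.norm_eq_abs] at hgb hg'b ⊢
    simp only [hF'def, hbdef]
    calc |(Real.cos θ * W ω - Real.sin θ * Y ω) * g (Real.cos θ * W ω - Real.sin θ * Y ω)
        + (Real.sin θ * W ω + Real.cos θ * Y ω) *
            (deriv g (Real.cos θ * W ω - Real.sin θ * Y ω) *
              (-Real.sin θ * W ω - Real.cos θ * Y ω))|
        ≤ |(Real.cos θ * W ω - Real.sin θ * Y ω)| * |g (Real.cos θ * W ω - Real.sin θ * Y ω)|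
          + |(Real.sin θ * W ω + Real.cos θ * Y ω)| *
            (|deriv g (Real.cos θ * W ω - Real.sin θ * Y ω)| *
              |(-Real.sin θ * W ω - Real.cos θ * Y ω)|) := by
          refine (abs_add_le _ _).trans ?_
          rw [abs_mul, abs_mul, abs_mul]
      _ ≤ (|W ω| + |Y ω|) * Cg + (|W ω| + |Y ω|) ^ 2 * Cg' := by
          have hb0 : (0:ℝ) ≤ |W ω| + |Y ω| := by positivity
          have t1 : |(Real.cos θ * W ω - Real.sin θ * Y ω)| *
              |g (Real.cos θ * W ω - Real.sin θ * Y ω)| ≤ (|W ω| + |Y ω|) * Cg := by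
            exact mul_le_mul e1 hgb (abs_nonneg _) hb0
          have t2 : |(Real.sin θ * W ω + Real.cos θ * Y ω)| *
              (|deriv g (Real.cos θ * W ω - Real.sin θ * Y ω)| *
                |(-Real.sin θ * W ω - Real.cos θ * Y ω)|) ≤ (|W ω| + |Y ω|) ^ 2 * Cg' := by
            have : |deriv g (Real.cos θ * W ω - Real.sin θ * Y ω)| *
                |(-Real.sin θ * W ω - Real.cos θ * Y ω)| ≤ Cg' * (|W ω| + |Y ω|) :=
              mul_le_mul hg'b e3 (abs_nonneg _) hCg'0
            calc |(Real.sin θ * W ω + Real.cos θ * Y ω)| *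
                (|deriv g (Real.cos θ * W ω - Real.sin θ * Y ω)| *
                  |(-Real.sin θ * W ω - Real.cos θ * Y ω)|)
                ≤ (|W ω| + |Y ω|) * (Cg' * (|W ω| + |Y ω|)) :=
                  mul_le_mul e2 this (by positivity) hb0
              _ = (|W ω| + |Y ω|) ^ 2 * Cg' := by ring
          linarith
    done
  have hdiff : ∀ᵐ ω ∂ℙ, ∀ θ ∈ Metric.ball (0 : ℝ) 1, HasDerivAt (F · ω) (F' θ ω) θ := by
    refine Filter.Eventually.of_forall fun ω θ _ => ?_
    have hu : HasDerivAt (fun t => Real.cos t * W ω - Real.sin t * Y ω)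
        (-Real.sin θ * W ω - Real.cos θ * Y ω) θ := by
      have := ((Real.hasDerivAt_cos θ).mul_const (W ω)).sub
        ((Real.hasDerivAt_sin θ).mul_const (Y ω))
      exact this
    have hv : HasDerivAt (fun t => Real.sin t * W ω + Real.cos t * Y ω)
        (Real.cos θ * W ω - Real.sin θ * Y ω) θ := by
      have := ((Real.hasDerivAt_sin θ).mul_const (W ω)).add
        ((Real.hasDerivAt_cos θ).mul_const (Y ω))
      simp only [sub_eq_add_neg, neg_mul] at this ⊢; exact this
    have hgd : HasDerivAt g (deriv g (Real.cos θ * W ω - Real.sin θ * Y ω))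
        (Real.cos θ * W ω - Real.sin θ * Y ω) :=
      (hg.differentiable (by simp)).differentiableAt.hasDerivAt
    have hcomp : HasDerivAt (fun t => g (Real.cos t * W ω - Real.sin t * Y ω))
        (deriv g (Real.cos θ * W ω - Real.sin θ * Y ω) *
          (-Real.sin θ * W ω - Real.cos θ * Y ω)) θ := hgd.comp θ hu
    exact hv.mul hcomp
  obtain ⟨hF'0int, hder⟩ := hasDerivAt_integral_of_dominated_loc_of_deriv_le
    (F := F) (F' := F') (x₀ := (0:ℝ)) (bound := bound) (Metric.ball_mem_nhds 0 one_pos)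
    (Filter.Eventually.of_forall hFmeas) hF0int (hF'meas 0) hbound hboundint hdiff
  -- the map θ ↦ ∫ F θ is constant, hence the derivative vanishes
  have hconst' : (fun θ => ∫ ω, F θ ω ∂ℙ) = fun _ => ∫ ω, Y ω * g (W ω) ∂ℙ := by
    funext θ; exact hconst θ
  have hzero : ∫ ω, F' 0 ω ∂ℙ = 0 := by
    have h2 : HasDerivAt (fun θ => ∫ ω, F θ ω ∂ℙ) 0 0 := by
      rw [hconst']; exact hasDerivAt_const _ _
    exact hder.unique h2
  -- rewrite F' 0
  have hF'0 : (fun ω => F' 0 ω) = fun ω => W ω * g (W ω) - Y ω ^ 2 * deriv g (W ω) := by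
    funext ω; simp [hF'def]; ring
  -- integrabilities
  have hWgW : Integrable (fun ω => W ω * g (W ω)) ℙ := by
    have : Integrable (fun ω => g (W ω) * W ω) ℙ :=
      (hint1 i0).bdd_mul ((hgcont.measurable.comp hW).aemeasurable).aestronglyMeasurable
        (Filter.Eventually.of_forall fun ω => hCg (W ω))
    exact this.congr (Filter.Eventually.of_forall fun ω => mul_comm _ _)
  have hYsq : Integrable (fun ω => Y ω ^ 2) ℙ := by
    refine (hint2 i1 i1).congr (Filter.Eventually.of_forall fun ω => ?_)
    exact (pow_two (Y ω)).symm
  have hY2g' : Integrable (fun ω => Y ω ^ 2 * deriv g (W ω)) ℙ := by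
    have : Integrable (fun ω => deriv g (W ω) * Y ω ^ 2) ℙ :=
      hYsq.bdd_mul ((hg'cont.measurable.comp hW).aemeasurable).aestronglyMeasurable
        (Filter.Eventually.of_forall fun ω => hCg' (W ω))
    exact this.congr (Filter.Eventually.of_forall fun ω => mul_comm _ _)
  have key : ∫ ω, W ω * g (W ω) ∂ℙ = ∫ ω, Y ω ^ 2 * deriv g (W ω) ∂ℙ := by
    have := hzero
    rw [show (fun ω => F' 0 ω) = F' 0 from rfl] at hF'0
    rw [hF'0] at this
    rw [integral_sub hWgW hY2g'] at this
    linarith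
  -- conditional expectation step
  show ∫ ω, W ω * g (W ω) ∂ℙ =
      ∫ ω, (ℙ[fun ω' => Y ω' ^ 2 | MeasurableSpace.comap W inferInstance]) ω
        * deriv g (W ω) ∂ℙ
  have hm : MeasurableSpace.comap W inferInstance ≤ _ := hW.comap_le
  haveI : SigmaFinite ((ℙ : Measure Ω).trim hm) := inferInstance
  have hWm : Measurable[MeasurableSpace.comap W inferInstance] W := comap_measurable W
  have hsmG : StronglyMeasurable[MeasurableSpace.comap W inferInstance]
      (fun ω => deriv g (W ω)) := (hg'cont.measurable.comp hWm).stronglyMeasurable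
  have hfq : Integrable ((fun ω => deriv g (W ω)) * fun ω => Y ω ^ 2) ℙ := by
    have : Integrable (fun ω => deriv g (W ω) * Y ω ^ 2) ℙ :=
      hYsq.bdd_mul ((hg'cont.measurable.comp hW).aemeasurable).aestronglyMeasurable
        (Filter.Eventually.of_forall fun ω => hCg' (W ω))
    exact this
  have hpull := condExp_mul_of_stronglyMeasurable_left hsmG hfq hYsq
  calc ∫ ω, W ω * g (W ω) ∂ℙ
      = ∫ ω, Y ω ^ 2 * deriv g (W ω) ∂ℙ := key
    _ = ∫ ω, deriv g (W ω) * Y ω ^ 2 ∂ℙ := by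
        refine integral_congr_ae (Filter.Eventually.of_forall fun ω => ?_)
        exact mul_comm _ _
    _ = ∫ ω, (ℙ[(fun ω => deriv g (W ω)) * fun ω => Y ω ^ 2 |
          MeasurableSpace.comap W inferInstance]) ω ∂ℙ := (integral_condExp hm (f := (fun ω => deriv g (W ω)) * fun ω => Y ω ^ 2)).symm
    _ = ∫ ω, deriv g (W ω) * (ℙ[fun ω' => Y ω' ^ 2 |
          MeasurableSpace.comap W inferInstance]) ω ∂ℙ := integral_congr_ae hpull
    _ = ∫ ω, (ℙ[fun ω' => Y ω' ^ 2 | MeasurableSpace.comap W inferInstance]) ω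
          * deriv g (W ω) ∂ℙ := by
        refine integral_congr_ae (Filter.Eventually.of_forall fun ω => ?_)
        exact mul_comm _ _
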